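/- arXiv:2111.03626 — 2 statements merged into one kernel-verified Lean document; each statement's English description precedes it below -/
import Mathlib

section
/- For any real numbers u and v, ρ_τ(u − v) − ρ_τ(u) = −v·ψ_τ(u) + ∫₀ᵛ (1{u ≤ s} − 1{u ≤ 0}) ds, where ρ_τ(u) = u(τ − 1{u ≤ 0}) is the quantile check function and ψ_τ(u) = τ − 1{u ≤ 0}. -/
/-! Writing `ρ_τ(w) = τ w + (-w)⁺`, the left-hand side is `-τ v + (v - u)⁺ - (-u)⁺`. On the other
side, `s ↦ (s - u)⁺` has right derivative `1{u ≤ s}` everywhere, so the integral of `1{u ≤ s}`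
over `[0, v]` is `(v - u)⁺ - (-u)⁺`, and the two `v · 1{u ≤ 0}` terms cancel. -/

open Set

lemma mul_sub_ite_nonpos_eq (τ w : ℝ) :
    w * (τ - if w ≤ 0 then 1 else 0) = τ * w + max (-w) 0 := by
  split_ifs with hw
  · rw [max_eq_left (by linarith)]; ring
  · rw [max_eq_right (by linarith)]; ring

lemma hasDerivWithinAt_max_sub_zero_Ioi (u x : ℝ) :
    HasDerivWithinAt (fun s => max (s - u) 0) (if u ≤ x then 1 else 0) (Ioi x) x := by
  split_ifs with hux
  · refine ((hasDerivAt_id x).sub_const u).hasDerivWithinAt.congr (fun s hs => ?_) ?_ <;>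
      simp only [id, max_eq_left_iff, sub_nonneg]
    exacts [hux.trans hs.le, hux]
  · have hxu : x < u := not_le.mp hux
    refine (hasDerivAt_const x (0 : ℝ)).congr_of_eventuallyEq ?_ |>.hasDerivWithinAt
    filter_upwards [Iio_mem_nhds hxu] with s hs
    exact max_eq_right (by linarith [mem_Iio.mp hs])

lemma monotone_ite_le (u : ℝ) : Monotone fun s : ℝ => if u ≤ s then (1 : ℝ) else 0 := by
  intro s t hst
  dsimp only
  split_ifs with hs ht
  exacts [le_rfl, absurd (hs.trans hst) ht, zero_le_one, le_rfl]

lemma integral_ite_le (u a b : ℝ) :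
    ∫ s in a..b, (if u ≤ s then (1 : ℝ) else 0) = max (b - u) 0 - max (a - u) 0 :=
  intervalIntegral.integral_eq_sub_of_hasDeriv_right
    ((continuous_sub_right u).max continuous_const).continuousOn
    (fun x _ => hasDerivWithinAt_max_sub_zero_Ioi u x) (monotone_ite_le u).intervalIntegrable

theorem knight_identity_general (τ : ℝ) (u v : ℝ) :
    (fun w : ℝ => w * (τ - if w ≤ 0 then 1 else 0)) (u - v)
      - (fun w : ℝ => w * (τ - if w ≤ 0 then 1 else 0)) u
    = -v * (τ - if u ≤ 0 then 1 else 0)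
      + ∫ s in (0:ℝ)..v, ((if u ≤ s then (1:ℝ) else 0) - (if u ≤ 0 then 1 else 0)) := by
  have hint : ∫ s in (0:ℝ)..v, ((if u ≤ s then (1:ℝ) else 0) - (if u ≤ 0 then 1 else 0))
      = max (v - u) 0 - max (-u) 0 - v * (if u ≤ 0 then 1 else 0) := by
    rw [intervalIntegral.integral_sub (monotone_ite_le u).intervalIntegrable
      intervalIntegrable_const, integral_ite_le, intervalIntegral.integral_const, smul_eq_mul,
      sub_zero, zero_sub]
  beta_reduce
  rw [hint, mul_sub_ite_nonpos_eq, mul_sub_ite_nonpos_eq, neg_sub]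
  ring

/-- Knight's identity for the quantile check function. -/
theorem knight_identity (τ : ℝ) (hτ : τ ∈ Set.Ioo (0:ℝ) 1) (u v : ℝ) :
    (fun w : ℝ => w * (τ - if w ≤ 0 then 1 else 0)) (u - v)
      - (fun w : ℝ => w * (τ - if w ≤ 0 then 1 else 0)) u
    = -v * (τ - if u ≤ 0 then 1 else 0)
      + ∫ s in (0:ℝ)..v, ((if u ≤ s then (1:ℝ) else 0) - (if u ≤ 0 then 1 else 0)) :=
  knight_identity_general τ u v
end

section
/- If F is a CDF with density f satisfying f(y) ≥ f_min > 0 for all y in a neighborhood containing 0 and the relevant arguments, and Z ∈ ℝᵈ satisfies c_λ ≤ λ_min(E[ZZᵀ]), then for any vector h ∈ ℝᵈ, E[∫₀^{Zᵀh} (F(s) − F(0)) ds] ≥ (f_min·c_λ/2)·‖h‖², provided |Zᵀh| stays in the neighborhood where f ≥ f_min almost surely. -/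
/-!
Write `t = Zᵀh`. Since `F' ≥ f_min` on `[-R, R]`, the function `s ↦ F s - F 0 - f_min s` is
monotone there and vanishes at `0`, so its integral from `0` to `t` is nonnegative whichever
sign `t` has. Hence `∫₀ᵗ (F s - F 0) ds ≥ f_min t² / 2` pointwise, and taking expectations
together with `E[(Zᵀh)²] ≥ c_λ ‖h‖²` gives the bound.
-/

open MeasureTheory Set

theorem intervalIntegral_nonneg_of_monotoneOn {g : ℝ → ℝ} {a b : ℝ}
    (hg : MonotoneOn g (uIcc a b)) (hga : g a = 0) : 0 ≤ ∫ x in a..b, g x := by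
  rcases le_total a b with hab | hba
  · refine intervalIntegral.integral_nonneg hab fun u hu => ?_
    rw [uIcc_of_le hab] at hg
    exact hga ▸ hg (left_mem_Icc.mpr hab) hu hu.1
  · have hneg : 0 ≤ ∫ x in b..a, -g x := by
      refine intervalIntegral.integral_nonneg hba fun u hu => ?_
      rw [uIcc_of_ge hba] at hg
      exact neg_nonneg.mpr (hga ▸ hg hu (right_mem_Icc.mpr hba) hu.2)
    rwa [intervalIntegral.integral_neg, ← intervalIntegral.integral_symm] at hneg

theorem monotoneOn_sub_mul_of_le_hasDerivAt {F f : ℝ → ℝ} {m R : ℝ}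
    (hF' : ∀ y ∈ Icc (-R) R, HasDerivAt F (f y) y) (hf : ∀ y ∈ Icc (-R) R, m ≤ f y) :
    MonotoneOn (fun s => F s - F 0 - m * s) (Icc (-R) R) := by
  have hderiv : ∀ y ∈ Icc (-R) R, HasDerivAt (fun s => F s - F 0 - m * s) (f y - m) y :=
    fun y hy => ((hF' y hy).sub_const (F 0)).sub (by simpa using (hasDerivAt_id y).const_mul m)
  refine monotoneOn_of_hasDerivWithinAt_nonneg (convex_Icc _ _)
    (fun y hy => (hderiv y hy).continuousAt.continuousWithinAt)
    (fun y hy => (hderiv y (interior_subset hy)).hasDerivWithinAt) fun y hy => ?_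
  exact sub_nonneg.mpr (hf y (interior_subset hy))

theorem mul_sq_le_integral_sub_of_le_hasDerivAt {F f : ℝ → ℝ} {m R t : ℝ}
    (hF' : ∀ y ∈ Icc (-R) R, HasDerivAt F (f y) y) (hf : ∀ y ∈ Icc (-R) R, m ≤ f y)
    (ht : |t| ≤ R) :
    m / 2 * t ^ 2 ≤ ∫ s in (0:ℝ)..t, (F s - F 0) := by
  set H : ℝ → ℝ := fun s => F s - F 0 - m * s
  have hsub : uIcc 0 t ⊆ Icc (-R) R := by
    obtain ⟨htl, htr⟩ := abs_le.mp ht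
    have hR : 0 ≤ R := (abs_nonneg t).trans ht
    exact uIcc_subset_Icc ⟨by linarith, hR⟩ ⟨htl, htr⟩
  have hH : MonotoneOn H (uIcc 0 t) := (monotoneOn_sub_mul_of_le_hasDerivAt hF' hf).mono hsub
  have hsplit : ∫ s in (0:ℝ)..t, (F s - F 0) = (∫ s in (0:ℝ)..t, H s) + m / 2 * t ^ 2 := by
    have hlin : ∫ s in (0:ℝ)..t, m * s = m / 2 * t ^ 2 := by
      rw [intervalIntegral.integral_const_mul, integral_id]
      ring
    rw [← hlin, ← intervalIntegral.integral_add hH.intervalIntegrable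
      ((continuous_const_mul m).intervalIntegrable 0 t)]
    simp only [H, sub_add_cancel]
  rw [hsplit]
  linarith [intervalIntegral_nonneg_of_monotoneOn hH (by simp [H])]

theorem expected_integrated_cdf_lower_bound_general {d : ℕ} {Ω : Type*} [MeasurableSpace Ω]
    (ℙ : Measure Ω)
    (Z : Ω → EuclideanSpace ℝ (Fin d)) (F f : ℝ → ℝ) (fmin clam R : ℝ)
    (hfmin : 0 < fmin)
    (hF' : ∀ y, HasDerivAt F (f y) y)
    (hfR : ∀ y ∈ Set.Icc (-R) R, fmin ≤ f y)
    (heig : ∀ h' : EuclideanSpace ℝ (Fin d),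
      clam * ‖h'‖ ^ 2 ≤ ∫ ω, (∑ j, Z ω j * h' j) ^ 2 ∂ℙ)
    (h : EuclideanSpace ℝ (Fin d))
    (hZ : ∀ᵐ ω ∂ℙ, |∑ j, Z ω j * h j| ≤ R)
    (hsq : Integrable (fun ω => (∑ j, Z ω j * h j) ^ 2) ℙ)
    (hint : Integrable (fun ω => ∫ s in (0:ℝ)..(∑ j, Z ω j * h j), (F s - F 0)) ℙ) :
    fmin * clam / 2 * ‖h‖ ^ 2
      ≤ ∫ ω, (∫ s in (0:ℝ)..(∑ j, Z ω j * h j), (F s - F 0)) ∂ℙ := by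
  have hpointwise : ∀ᵐ ω ∂ℙ, fmin / 2 * (∑ j, Z ω j * h j) ^ 2
      ≤ ∫ s in (0:ℝ)..(∑ j, Z ω j * h j), (F s - F 0) := by
    filter_upwards [hZ] with ω hω
    exact mul_sq_le_integral_sub_of_le_hasDerivAt (fun y _ => hF' y) hfR hω
  calc fmin * clam / 2 * ‖h‖ ^ 2 = fmin / 2 * (clam * ‖h‖ ^ 2) := by ring
    _ ≤ fmin / 2 * ∫ ω, (∑ j, Z ω j * h j) ^ 2 ∂ℙ :=
        mul_le_mul_of_nonneg_left (heig h) (by positivity)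
    _ = ∫ ω, fmin / 2 * (∑ j, Z ω j * h j) ^ 2 ∂ℙ := (integral_const_mul _ _).symm
    _ ≤ _ := integral_mono_ae (hsq.const_mul _) hint hpointwise

/-- Positive-definite quadratic lower bound for the expected integrated CDF increment. -/
theorem expected_integrated_cdf_lower_bound {d : ℕ} {Ω : Type*} [MeasurableSpace Ω]
    (ℙ : Measure Ω) [IsProbabilityMeasure ℙ]
    (Z : Ω → EuclideanSpace ℝ (Fin d)) (F f : ℝ → ℝ) (fmin clam R : ℝ)
    (hfmin : 0 < fmin) (hclam : 0 < clam) (hR : 0 ≤ R)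
    (hF' : ∀ y, HasDerivAt F (f y) y)
    (hfR : ∀ y ∈ Set.Icc (-R) R, fmin ≤ f y)
    (heig : ∀ h' : EuclideanSpace ℝ (Fin d),
      clam * ‖h'‖ ^ 2 ≤ ∫ ω, (∑ j, Z ω j * h' j) ^ 2 ∂ℙ)
    (h : EuclideanSpace ℝ (Fin d))
    (hZ : ∀ᵐ ω ∂ℙ, |∑ j, Z ω j * h j| ≤ R)
    (hsq : Integrable (fun ω => (∑ j, Z ω j * h j) ^ 2) ℙ)
    (hint : Integrable (fun ω => ∫ s in (0:ℝ)..(∑ j, Z ω j * h j), (F s - F 0)) ℙ) :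
    fmin * clam / 2 * ‖h‖ ^ 2
      ≤ ∫ ω, (∫ s in (0:ℝ)..(∑ j, Z ω j * h j), (F s - F 0)) ∂ℙ :=
  expected_integrated_cdf_lower_bound_general ℙ Z F f fmin clam R hfmin hF' hfR heig h hZ hsq hint
end
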